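/- arXiv:1808.10650 — 7 statements merged into one kernel-verified Lean document; each statement's English description precedes it below -/
import Mathlib

section
/- Let L be a symmetric PSD N×N matrix, P ∈ ℝ^{n×N} with full row rank, and L_c = (P^+)ᵀ L P^+. Then for each k = 1,...,n, the k-th smallest eigenvalue λ̃_k of L_c satisfies λ̃_k ≥ λ_k / λ_max(PPᵀ), where λ_k is the k-th smallest eigenvalue of L. -/
open Matrix Finset



namespace InterlacingAux

variable {m : ℕ}

lemma sum_dotProduct' {ι : Type*} (s : Finset ι) (f : ι → Fin m → ℝ) (w : Fin m → ℝ) :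
    (∑ i ∈ s, f i) ⬝ᵥ w = ∑ i ∈ s, f i ⬝ᵥ w := by
  simp only [dotProduct, Finset.sum_apply, Finset.sum_mul]
  rw [Finset.sum_comm]

lemma dotProduct_sum' {ι : Type*} (s : Finset ι) (w : Fin m → ℝ) (f : ι → Fin m → ℝ) :
    w ⬝ᵥ (∑ i ∈ s, f i) = ∑ i ∈ s, w ⬝ᵥ f i := by
  simp only [dotProduct, Finset.sum_apply, Finset.mul_sum]
  rw [Finset.sum_comm]

lemma transfer {a b : ℕ} (B : Matrix (Fin a) (Fin b) ℝ) (y : Fin b → ℝ) (z : Fin a → ℝ) :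
    y ⬝ᵥ (Bᵀ *ᵥ z) = (B *ᵥ y) ⬝ᵥ z := by
  simp only [dotProduct, mulVec, transpose_apply, Finset.mul_sum, Finset.sum_mul]
  rw [Finset.sum_comm]
  exact Finset.sum_congr rfl fun i _ => Finset.sum_congr rfl fun j _ => by ring

lemma ortho_li {ι : Type*} [Fintype ι] [DecidableEq ι] (v : ι → (Fin m → ℝ))
    (h : ∀ i j, v i ⬝ᵥ v j = if i = j then 1 else 0) : LinearIndependent ℝ v := by
  rw [Fintype.linearIndependent_iff]
  intro g hg j
  have h2 := congrArg (fun x => x ⬝ᵥ v j) hg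
  simp only [sum_dotProduct', smul_dotProduct, h, zero_dotProduct, smul_eq_mul, mul_ite,
    mul_one, mul_zero, Finset.sum_ite_eq', Finset.sum_ite_eq, Finset.mem_univ, if_true] at h2
  exact h2


lemma quad_repr (A : Matrix (Fin m) (Fin m) ℝ) (v : Fin m → Fin m → ℝ)
    (e : Fin m → ℝ)
    (hortho : ∀ i j, v i ⬝ᵥ v j = if i = j then 1 else 0)
    (heig : ∀ i, A *ᵥ v i = e i • v i)
    {ι : Type*} [Fintype ι] [DecidableEq ι] (f : ι → Fin m) (hf : Function.Injective f)
    (c : ι → ℝ) :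
    ((∑ i, c i • v (f i)) ⬝ᵥ (A *ᵥ (∑ i, c i • v (f i))) = ∑ i, e (f i) * c i ^ 2)
    ∧ ((∑ i, c i • v (f i)) ⬝ᵥ (∑ i, c i • v (f i)) = ∑ i, c i ^ 2) := by
  have hvv : ∀ i j : ι, v (f i) ⬝ᵥ v (f j) = if i = j then 1 else 0 := by
    intro i j; rw [hortho]; simp [hf.eq_iff]
  have hA : A *ᵥ (∑ i, c i • v (f i)) = ∑ i, c i • (e (f i) • v (f i)) := by
    have : A *ᵥ (∑ i, c i • v (f i)) = A.mulVecLin (∑ i, c i • v (f i)) := rfl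
    rw [this, map_sum]
    refine Finset.sum_congr rfl fun i _ => ?_
    rw [LinearMap.map_smul, Matrix.mulVecLin_apply, heig]
  constructor
  · rw [hA]
    rw [sum_dotProduct']
    refine Finset.sum_congr rfl fun i _ => ?_
    rw [dotProduct_sum']
    simp only [smul_dotProduct, dotProduct_smul, hvv, smul_eq_mul, mul_ite, mul_one, mul_zero,
      Finset.sum_ite_eq', Finset.sum_ite_eq, Finset.mem_univ, if_true]
    ring
  · rw [sum_dotProduct']
    refine Finset.sum_congr rfl fun i _ => ?_
    rw [dotProduct_sum']
    simp only [smul_dotProduct, dotProduct_smul, hvv, smul_eq_mul, mul_ite, mul_one, mul_zero,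
      Finset.sum_ite_eq', Finset.sum_ite_eq, Finset.mem_univ, if_true]
    ring

lemma rayleigh_le (A : Matrix (Fin m) (Fin m) ℝ) (v : Fin m → Fin m → ℝ)
    (e : Fin m → ℝ)
    (hortho : ∀ i j, v i ⬝ᵥ v j = if i = j then 1 else 0)
    (heig : ∀ i, A *ᵥ v i = e i • v i)
    {ι : Type*} [Fintype ι] [DecidableEq ι] (f : ι → Fin m) (hf : Function.Injective f)
    (t : ℝ) (ht : ∀ i, e (f i) ≤ t) (x : Fin m → ℝ)
    (hx : x ∈ Submodule.span ℝ (Set.range (fun i => v (f i)))) :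
    x ⬝ᵥ (A *ᵥ x) ≤ t * (x ⬝ᵥ x) := by
  obtain ⟨c, rfl⟩ := (Submodule.mem_span_range_iff_exists_fun ℝ).mp hx
  obtain ⟨h1, h2⟩ := quad_repr A v e hortho heig f hf c
  rw [h1, h2, Finset.mul_sum]
  exact Finset.sum_le_sum fun i _ => mul_le_mul_of_nonneg_right (ht i) (sq_nonneg _)

lemma rayleigh_ge (A : Matrix (Fin m) (Fin m) ℝ) (v : Fin m → Fin m → ℝ)
    (e : Fin m → ℝ)
    (hortho : ∀ i j, v i ⬝ᵥ v j = if i = j then 1 else 0)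
    (heig : ∀ i, A *ᵥ v i = e i • v i)
    {ι : Type*} [Fintype ι] [DecidableEq ι] (f : ι → Fin m) (hf : Function.Injective f)
    (t : ℝ) (ht : ∀ i, t ≤ e (f i)) (x : Fin m → ℝ)
    (hx : x ∈ Submodule.span ℝ (Set.range (fun i => v (f i)))) :
    t * (x ⬝ᵥ x) ≤ x ⬝ᵥ (A *ᵥ x) := by
  obtain ⟨c, rfl⟩ := (Submodule.mem_span_range_iff_exists_fun ℝ).mp hx
  obtain ⟨h1, h2⟩ := quad_repr A v e hortho heig f hf c
  rw [h1, h2, Finset.mul_sum]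
  exact Finset.sum_le_sum fun i _ => mul_le_mul_of_nonneg_right (ht i) (sq_nonneg _)

lemma span_top_of_ortho (v : Fin m → Fin m → ℝ)
    (h : ∀ i j, v i ⬝ᵥ v j = if i = j then 1 else 0) :
    Submodule.span ℝ (Set.range v) = ⊤ := by
  apply Submodule.eq_top_of_finrank_eq
  rw [finrank_span_eq_card (ortho_li v h)]
  simp

lemma exists_eigenbasis {A : Matrix (Fin m) (Fin m) ℝ} (hA : A.IsHermitian) (e : Fin m → ℝ)
    (he : ∃ σ : Equiv.Perm (Fin m), ∀ i, e i = hA.eigenvalues (σ i)) :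
    ∃ v : Fin m → (Fin m → ℝ),
      (∀ i j, v i ⬝ᵥ v j = if i = j then 1 else 0) ∧
      (∀ i, A *ᵥ v i = e i • v i) := by
  obtain ⟨σ, hσ⟩ := he
  refine ⟨fun i => hA.eigenvectorBasis (σ i), fun i j => ?_, fun i => ?_⟩
  · have horth := hA.eigenvectorBasis.orthonormal
    rw [orthonormal_iff_ite] at horth
    have h2 := horth (σ i) (σ j)
    simp only [PiLp.inner_apply, RCLike.inner_apply, starRingEnd_apply, star_trivial] at h2
    rw [show (fun i => hA.eigenvectorBasis (σ i)) i ⬝ᵥ (fun i => hA.eigenvectorBasis (σ i)) j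
        = ∑ l, hA.eigenvectorBasis (σ j) l * hA.eigenvectorBasis (σ i) l from
          Finset.sum_congr rfl fun l _ => mul_comm _ _, h2]
    simp [EmbeddingLike.apply_eq_iff_eq]
  · rw [hσ]
    exact hA.mulVec_eigenvectorBasis (σ i)

end InterlacingAux
open InterlacingAux


/-- The four Penrose conditions characterizing the Moore–Penrose pseudoinverse. -/
def IsMoorePenrose {m n : ℕ} (P : Matrix (Fin m) (Fin n) ℝ)
    (Pp : Matrix (Fin n) (Fin m) ℝ) : Prop :=
  P * Pp * P = P ∧ Pp * P * Pp = Pp ∧ (P * Pp)ᵀ = P * Pp ∧ (Pp * P)ᵀ = Pp * P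

/-- Interlacing, lower bound: the `k`-th smallest eigenvalue `λ̃_k` of
`L_c = (P⁺)ᵀ L P⁺` satisfies `λ̃_k ≥ λ_k / λ_max(PPᵀ)`.  Here `μ` and `μc` are the
nondecreasing enumerations of the eigenvalues of `L` and `L_c`. -/
theorem interlacing_lower {n N : ℕ} (hn : 0 < n) (hnN : n ≤ N)
    (L : Matrix (Fin N) (Fin N) ℝ) (hL : L.PosSemidef)
    (P : Matrix (Fin n) (Fin N) ℝ) (hrank : P.rank = n)
    (Pp : Matrix (Fin N) (Fin n) ℝ) (hMP : IsMoorePenrose P Pp)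
    (hH : (P * Pᵀ).IsHermitian)
    (hLc : (Ppᵀ * L * Pp).IsHermitian)
    (μ : Fin N → ℝ) (hμmono : Monotone μ)
    (hμ : ∃ σ : Equiv.Perm (Fin N), ∀ i, μ i = hL.1.eigenvalues (σ i))
    (μc : Fin n → ℝ) (hμcmono : Monotone μc)
    (hμc : ∃ σ : Equiv.Perm (Fin n), ∀ i, μc i = hLc.eigenvalues (σ i))
    (k : Fin n) :
    μ (Fin.castLE hnN k) / (⨆ i, hH.eigenvalues i) ≤ μc k := by
  classical
  set c : ℝ := ⨆ i, hH.eigenvalues i with hc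
  obtain ⟨w, hwortho, hweig⟩ := exists_eigenbasis hLc μc hμc
  obtain ⟨v, hvortho, hveig⟩ := exists_eigenbasis hL.1 μ hμ
  obtain ⟨u, huortho, hueig⟩ := exists_eigenbasis hH hH.eigenvalues ⟨1, fun i => rfl⟩
  -- surjectivity of P and the left-inverse property
  have hsurj : Function.Surjective P.mulVecLin := by
    rw [← LinearMap.range_eq_top]
    apply Submodule.eq_top_of_finrank_eq
    have : Module.finrank ℝ (LinearMap.range P.mulVecLin) = n := hrank
    simp [this]
  have hPPp : ∀ y : Fin n → ℝ, P *ᵥ (Pp *ᵥ y) = y := by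
    intro y
    obtain ⟨x, hx⟩ := hsurj y
    have hx' : P *ᵥ x = y := hx
    calc P *ᵥ (Pp *ᵥ y) = P *ᵥ (Pp *ᵥ (P *ᵥ x)) := by rw [hx']
      _ = (P * Pp * P) *ᵥ x := by rw [← Matrix.mulVec_mulVec, ← Matrix.mulVec_mulVec]
      _ = P *ᵥ x := by rw [hMP.1]
      _ = y := hx'
  have hPpinj : Function.Injective Pp.mulVecLin := by
    intro a b hab
    have h2 := congrArg (P *ᵥ ·) hab
    simpa only [Matrix.mulVecLin_apply, hPPp] using h2
  -- the three subspaces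
  set S₁ : Submodule ℝ (Fin n → ℝ) :=
    Submodule.span ℝ (Set.range (fun i : ↥(Finset.Iic k) => w i)) with hS₁def
  set U : Submodule ℝ (Fin N → ℝ) := S₁.map Pp.mulVecLin with hUdef
  set V : Submodule ℝ (Fin N → ℝ) :=
    Submodule.span ℝ (Set.range (fun i : ↥(Finset.Ici (Fin.castLE hnN k)) => v i)) with hVdef
  have liw : LinearIndependent ℝ (fun i : ↥(Finset.Iic k) => w ↑i) :=
    (ortho_li w hwortho).comp _ (Subtype.val_injective (p := (· ∈ Finset.Iic k)))
  have liv : LinearIndependent ℝ (fun i : ↥(Finset.Ici (Fin.castLE hnN k)) => v ↑i) :=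
    (ortho_li v hvortho).comp _
      (Subtype.val_injective (p := (· ∈ Finset.Ici (Fin.castLE hnN k))))
  have hS₁ : Module.finrank ℝ S₁ = k.val + 1 := by
    rw [hS₁def, finrank_span_eq_card liw]
    rw [Fintype.card_coe, Fin.card_Iic]
  have hU : Module.finrank ℝ U = k.val + 1 := by
    rw [← hS₁]
    exact (Submodule.equivMapOfInjective Pp.mulVecLin hPpinj S₁).finrank_eq.symm
  have hV : Module.finrank ℝ V = N - k.val := by
    rw [hVdef, finrank_span_eq_card liv]
    rw [Fintype.card_coe, Fin.card_Ici]
    rfl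
  have hkN : (k : ℕ) < N := lt_of_lt_of_le k.isLt hnN
  -- nonzero vector in the intersection
  have hbot : U ⊓ V ≠ ⊥ := by
    intro h
    have h2 := Submodule.finrank_sup_add_finrank_inf_eq U V
    rw [h, finrank_bot, hU, hV] at h2
    have h3 : Module.finrank ℝ ↥(U ⊔ V) ≤ N := by
      have := Submodule.finrank_le (U ⊔ V)
      simpa using this
    omega
  obtain ⟨x, hxUV, hx0⟩ := Submodule.exists_mem_ne_zero_of_ne_bot hbot
  obtain ⟨y, hyS₁, hyx⟩ := hxUV.1
  have hxV : x ∈ V := hxUV.2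
  have hyx' : Pp *ᵥ y = x := hyx
  have hPx : P *ᵥ x = y := by rw [← hyx']; exact hPPp y
  have hy0 : y ≠ 0 := by
    intro h
    apply hx0
    rw [← hyx', h, Matrix.mulVec_zero]
  -- positivity of the two norms
  have hdotpos : ∀ {p : ℕ} (z : Fin p → ℝ), z ≠ 0 → 0 < z ⬝ᵥ z := by
    intro p z hz
    have h1 : 0 ≤ z ⬝ᵥ z := Finset.sum_nonneg fun i _ => mul_self_nonneg _
    rcases h1.lt_or_eq with h | h
    · exact h
    · exact absurd ((dotProduct_self_eq_zero).mp h.symm) hz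
  have ha : 0 < y ⬝ᵥ y := hdotpos y hy0
  have hq : 0 < x ⬝ᵥ x := hdotpos x hx0
  -- quadratic form identity
  have hq1 : y ⬝ᵥ ((Ppᵀ * L * Pp) *ᵥ y) = x ⬝ᵥ (L *ᵥ x) := by
    rw [← hyx']
    calc y ⬝ᵥ ((Ppᵀ * L * Pp) *ᵥ y) = y ⬝ᵥ (Ppᵀ *ᵥ ((L * Pp) *ᵥ y)) := by
          rw [Matrix.mulVec_mulVec, Matrix.mul_assoc]
      _ = (Pp *ᵥ y) ⬝ᵥ ((L * Pp) *ᵥ y) := transfer Pp y _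
      _ = (Pp *ᵥ y) ⬝ᵥ (L *ᵥ (Pp *ᵥ y)) := by rw [Matrix.mulVec_mulVec]
  -- Rayleigh bounds
  have hR1 : y ⬝ᵥ ((Ppᵀ * L * Pp) *ᵥ y) ≤ μc k * (y ⬝ᵥ y) := by
    refine rayleigh_le _ w μc hwortho hweig _
      (Subtype.val_injective (p := (· ∈ Finset.Iic k))) (μc k)
      (fun i => hμcmono (Finset.mem_Iic.mp i.2)) y hyS₁
  have hR2 : μ (Fin.castLE hnN k) * (x ⬝ᵥ x) ≤ x ⬝ᵥ (L *ᵥ x) := by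
    refine rayleigh_ge _ v μ hvortho hveig _
      (Subtype.val_injective (p := (· ∈ Finset.Ici (Fin.castLE hnN k)))) _
      (fun i => hμmono (Finset.mem_Ici.mp i.2)) x hxV
  -- quadratic form bound for P * Pᵀ
  have hPPT : ∀ z : Fin n → ℝ, z ⬝ᵥ ((P * Pᵀ) *ᵥ z) ≤ c * (z ⬝ᵥ z) := by
    intro z
    refine rayleigh_le _ u hH.eigenvalues huortho hueig id Function.injective_id c
      (fun i => le_ciSup (Set.Finite.bddAbove (Set.finite_range _)) i) z ?_
    have : Set.range (fun i : Fin n => u (id i)) = Set.range u := rfl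
    rw [this, span_top_of_ortho u huortho]
    trivial
  -- Cauchy–Schwarz step : ‖y‖² ≤ c ‖x‖²
  have hyy : y ⬝ᵥ y ≤ c * (x ⬝ᵥ x) := by
    have h1 : x ⬝ᵥ (Pᵀ *ᵥ y) = y ⬝ᵥ y := by
      rw [transfer P x y, hPx]
    have h2 : (x ⬝ᵥ (Pᵀ *ᵥ y)) ^ 2 ≤ (x ⬝ᵥ x) * ((Pᵀ *ᵥ y) ⬝ᵥ (Pᵀ *ᵥ y)) := by
      have := Finset.sum_mul_sq_le_sq_mul_sq Finset.univ x (Pᵀ *ᵥ y)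
      simpa [dotProduct, pow_two] using this
    have h3 : (Pᵀ *ᵥ y) ⬝ᵥ (Pᵀ *ᵥ y) = y ⬝ᵥ ((P * Pᵀ) *ᵥ y) := by
      rw [transfer P (Pᵀ *ᵥ y) y, Matrix.mulVec_mulVec, dotProduct_comm]
    have h4 := hPPT y
    nlinarith [ha, hq]
  have hc0 : 0 < c := by nlinarith [ha, hq, hyy]
  have hμ0 : 0 ≤ μ (Fin.castLE hnN k) := by
    obtain ⟨σ, hσ⟩ := hμ
    rw [hσ]
    exact hL.eigenvalues_nonneg _
  rw [div_le_iff₀ hc0]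
  have chain : μ (Fin.castLE hnN k) * (y ⬝ᵥ y) ≤ (μc k * c) * (y ⬝ᵥ y) := by
    calc μ (Fin.castLE hnN k) * (y ⬝ᵥ y) ≤ μ (Fin.castLE hnN k) * (c * (x ⬝ᵥ x)) :=
          mul_le_mul_of_nonneg_left hyy hμ0
      _ = c * (μ (Fin.castLE hnN k) * (x ⬝ᵥ x)) := by ring
      _ ≤ c * (x ⬝ᵥ (L *ᵥ x)) := mul_le_mul_of_nonneg_left hR2 hc0.le
      _ = c * (y ⬝ᵥ ((Ppᵀ * L * Pp) *ᵥ y)) := by rw [hq1]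
      _ ≤ c * (μc k * (y ⬝ᵥ y)) := mul_le_mul_of_nonneg_left hR1 hc0.le
      _ = (μc k * c) * (y ⬝ᵥ y) := by ring
  exact le_of_mul_le_mul_right chain ha
end

section
/- Let L be symmetric PSD with L = SᵀS, let P ∈ ℝ^{n×N}, Π = P^+P, and L_c = (P^+)ᵀLP^+. If x ∈ ℝ^N satisfies ‖x − Πx‖_L ≤ ε‖x‖_L (where ‖y‖_L = √(yᵀLy)), then (1−ε)‖x‖_L ≤ ‖Px‖_{L_c} ≤ (1+ε)‖x‖_L, where ‖x_c‖_{L_c} = √(x_cᵀ L_c x_c). -/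
open Matrix Finset

/-- The semi-norm `‖x‖_L = √(xᵀ L x)` induced by a PSD matrix `L`. -/
noncomputable def lnorm {N : ℕ} (L : Matrix (Fin N) (Fin N) ℝ) (x : Fin N → ℝ) : ℝ :=
  Real.sqrt (x ⬝ᵥ (L *ᵥ x))

/-!
Since `L_c = (P⁺)ᵀ L P⁺`, we have `‖P x‖_{L_c} = ‖P⁺ P x‖_L = ‖Π x‖_L`, and
`‖y‖_L = ‖S y‖₂` is a seminorm. Both bounds are then the reverse triangle inequality
`|‖x‖_L - ‖Π x‖_L| ≤ ‖x - Π x‖_L ≤ ε ‖x‖_L`.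
-/

lemma lnorm_transpose_mul_mul {m N : ℕ} (L : Matrix (Fin N) (Fin N) ℝ)
    (A : Matrix (Fin N) (Fin m) ℝ) (y : Fin m → ℝ) :
    lnorm (Aᵀ * L * A) y = lnorm L (A *ᵥ y) := by
  rw [lnorm, lnorm, ← mulVec_mulVec, ← mulVec_mulVec, dotProduct_mulVec, vecMul_transpose]

lemma lnorm_gram_eq_norm {M N : ℕ} (S : Matrix (Fin M) (Fin N) ℝ) (y : Fin N → ℝ) :
    lnorm (Sᵀ * S) y = ‖WithLp.toLp 2 (S *ᵥ y)‖ := by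
  rw [lnorm, ← mulVec_mulVec, dotProduct_mulVec, vecMul_transpose, EuclideanSpace.norm_eq]
  simp [dotProduct, sq]

lemma abs_lnorm_gram_sub_lnorm_gram_le {M N : ℕ} (S : Matrix (Fin M) (Fin N) ℝ)
    (x y : Fin N → ℝ) :
    |lnorm (Sᵀ * S) x - lnorm (Sᵀ * S) y| ≤ lnorm (Sᵀ * S) (x - y) := by
  simp only [lnorm_gram_eq_norm, mulVec_sub, WithLp.toLp_sub]
  exact abs_norm_sub_norm_le _ _

theorem restricted_isometry_general {n N M : ℕ}
    (L : Matrix (Fin N) (Fin N) ℝ) (S : Matrix (Fin M) (Fin N) ℝ) (hLS : L = Sᵀ * S)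
    (P : Matrix (Fin n) (Fin N) ℝ) (Pp : Matrix (Fin N) (Fin n) ℝ)
    (ε : ℝ) (x : Fin N → ℝ)
    (hx : lnorm L (x - (Pp * P) *ᵥ x) ≤ ε * lnorm L x) :
    (1 - ε) * lnorm L x ≤ lnorm (Ppᵀ * L * Pp) (P *ᵥ x) ∧
      lnorm (Ppᵀ * L * Pp) (P *ᵥ x) ≤ (1 + ε) * lnorm L x := by
  subst hLS
  rw [lnorm_transpose_mul_mul, mulVec_mulVec]
  have hdev := abs_le.mp ((abs_lnorm_gram_sub_lnorm_gram_le S x ((Pp * P) *ᵥ x)).trans hx)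
  constructor <;> linarith [hdev.1, hdev.2]

/-- Restricted spectral approximation implies restricted isometry:
if `‖x − Πx‖_L ≤ ε ‖x‖_L` then `(1−ε)‖x‖_L ≤ ‖Px‖_{L_c} ≤ (1+ε)‖x‖_L`. -/
theorem restricted_isometry {n N M : ℕ}
    (L : Matrix (Fin N) (Fin N) ℝ) (S : Matrix (Fin M) (Fin N) ℝ) (hLS : L = Sᵀ * S)
    (P : Matrix (Fin n) (Fin N) ℝ) (Pp : Matrix (Fin N) (Fin n) ℝ)
    (hMP : IsMoorePenrose P Pp)
    (ε : ℝ) (hε : 0 ≤ ε) (x : Fin N → ℝ)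
    (hx : lnorm L (x - (Pp * P) *ᵥ x) ≤ ε * lnorm L x) :
    (1 - ε) * lnorm L x ≤ lnorm (Ppᵀ * L * Pp) (P *ᵥ x) ∧
      lnorm (Ppᵀ * L * Pp) (P *ᵥ x) ≤ (1 + ε) * lnorm L x :=
  restricted_isometry_general L S hLS P Pp ε x hx
end

section
/- Let L be symmetric PSD with eigenpair (λ_i, u_i) where ‖u_i‖₂ = 1 and λ_i > 0. Let Π be any symmetric projection matrix with complement Π⊥ = I − Π. If ‖Π⊥u_i‖_L ≤ ε‖u_i‖_L and ‖Πu_i‖²_L ≥ (1−ε)²λ_i (restricted spectral approximation with constant ε ∈ [0,1]), then ‖Π⊥u_i‖₂² ≤ ε. -/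
open Matrix Finset

/-- If `u_i` is a unit eigenvector of a PSD matrix `L` with eigenvalue `λ_i > 0`, `Π` is a
symmetric projection with `Π⊥ = I − Π`, and `‖Π⊥u_i‖²_L ≤ ε²λ_i` and
`‖Πu_i‖²_L ≥ (1−ε)²λ_i` with `0 ≤ ε ≤ 1`, then `‖Π⊥u_i‖₂² ≤ ε`. -/
theorem projection_error_bound {N : ℕ}
    (L : Matrix (Fin N) (Fin N) ℝ) (hL : L.PosSemidef)
    (lam : ℝ) (hlam : 0 < lam)
    (u : Fin N → ℝ) (heig : L *ᵥ u = lam • u) (hunit : u ⬝ᵥ u = 1)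
    (Pi : Matrix (Fin N) (Fin N) ℝ) (hsym : Piᵀ = Pi) (hidem : Pi * Pi = Pi)
    (ε : ℝ) (hε0 : 0 ≤ ε) (hε1 : ε ≤ 1)
    (h1 : (u - Pi *ᵥ u) ⬝ᵥ (L *ᵥ (u - Pi *ᵥ u)) ≤ ε ^ 2 * lam)
    (h2 : (1 - ε) ^ 2 * lam ≤ (Pi *ᵥ u) ⬝ᵥ (L *ᵥ (Pi *ᵥ u))) :
    (u - Pi *ᵥ u) ⬝ᵥ (u - Pi *ᵥ u) ≤ ε := by
  have hLsym : Lᵀ = L := by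
    have := hL.1
    rwa [Matrix.IsHermitian, Matrix.conjTranspose_eq_transpose_of_trivial] at this
  have symL : ∀ x y : Fin N → ℝ, x ⬝ᵥ (L *ᵥ y) = y ⬝ᵥ (L *ᵥ x) := by
    intro x y
    rw [Matrix.dotProduct_mulVec, ← Matrix.mulVec_transpose, hLsym, dotProduct_comm]
  set v : Fin N → ℝ := Pi *ᵥ u with hv
  set w : Fin N → ℝ := u - v with hw
  -- v ⬝ v = u ⬝ v
  have hvv : v ⬝ᵥ v = u ⬝ᵥ v := by
    rw [hv, Matrix.dotProduct_mulVec, ← Matrix.mulVec_transpose, hsym,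
      Matrix.mulVec_mulVec, hidem]
    exact dotProduct_comm _ _
  -- u ⬝ L u = lam
  have huLu : u ⬝ᵥ (L *ᵥ u) = lam := by
    rw [heig, dotProduct_smul, smul_eq_mul, hunit, mul_one]
  -- u ⬝ w = w ⬝ w
  have huw : u ⬝ᵥ w = w ⬝ᵥ w := by
    have : w ⬝ᵥ w = u ⬝ᵥ w - v ⬝ᵥ w := by rw [hw]; ring_nf; rw [sub_dotProduct]
    have hvw : v ⬝ᵥ w = 0 := by
      rw [hw, dotProduct_sub, dotProduct_comm v u, ← hvv, sub_self]
    rw [this, hvw, sub_zero]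
  -- lam * (w ⬝ w) = b + c
  have key1 : lam * (w ⬝ᵥ w) = v ⬝ᵥ (L *ᵥ w) + w ⬝ᵥ (L *ᵥ w) := by
    have : u ⬝ᵥ (L *ᵥ w) = lam * (w ⬝ᵥ w) := by
      rw [symL, heig, dotProduct_smul, smul_eq_mul, dotProduct_comm, huw]
    rw [← this]
    have : u = v + w := by rw [hw]; ring
    nth_rewrite 1 [this]
    rw [add_dotProduct]
  -- lam = a + 2b + c
  have key2 : lam = v ⬝ᵥ (L *ᵥ v) + 2 * (v ⬝ᵥ (L *ᵥ w)) + w ⬝ᵥ (L *ᵥ w) := by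
    have hu : u = v + w := by rw [hw]; ring
    have := huLu
    nth_rewrite 1 [hu] at this
    rw [hu] at this
    rw [add_dotProduct, Matrix.mulVec_add, dotProduct_add,
      dotProduct_add, symL w v] at this
    linarith
  nlinarith [key1, key2, h1, h2, hlam, mul_pos hlam hlam]
end

section
/- Suppose for each level ℓ = 1,...,c, vectors satisfy ‖S_{ℓ-1} Π⊥_ℓ x_{ℓ-1}‖₂ ≤ σ_ℓ ‖S_{ℓ-1} x_{ℓ-1}‖₂, where x_ℓ = P_ℓ x_{ℓ-1}, Π_ℓ = P_ℓ^+P_ℓ, Π⊥_ℓ = I − Π_ℓ, and S_ℓ satisfies ‖S_ℓ x_ℓ‖₂ = ‖S_{ℓ-1} Π_ℓ x_{ℓ-1}‖₂. Then the end-to-end error satisfies ‖S₀ x₀ − S_c x_c‖₂ ≤ (∏_{ℓ=1}^c (1 + σ_ℓ) − 1) ‖S₀ x₀‖₂. -/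
open Matrix Finset

/-- The Euclidean norm `‖v‖₂ = √(vᵀv)`. -/
noncomputable def enorm2 {m : ℕ} (v : Fin m → ℝ) : ℝ := Real.sqrt (v ⬝ᵥ v)

/-- The sequence of reduced vectors `x_0 = x`, `x_ℓ = P_ℓ x_{ℓ-1}`. -/
def xs {dims : ℕ → ℕ} (P : ∀ ℓ, Matrix (Fin (dims (ℓ + 1))) (Fin (dims ℓ)) ℝ)
    (x0 : Fin (dims 0) → ℝ) : ∀ ℓ, Fin (dims ℓ) → ℝ
  | 0 => x0
  | ℓ + 1 => P ℓ *ᵥ xs P x0 ℓ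

/-!
Write `e_ℓ = S_ℓ x_ℓ`. The compatibility condition turns the one-level error `e_ℓ - e_{ℓ+1}` into
`S_ℓ Π⊥_ℓ x_ℓ`, of norm at most `σ_ℓ ‖e_ℓ‖`. Telescoping with the triangle inequality, and
bounding `‖e_ℓ‖ ≤ ‖e_0‖ + ‖e_0 - e_ℓ‖ ≤ ∏_{k<ℓ} (1 + σ_k) ‖e_0‖` along the way, gives the claim.
-/

theorem enorm2_eq_norm_toLp {m : ℕ} (v : Fin m → ℝ) : enorm2 v = ‖WithLp.toLp 2 v‖ := by
  simp only [enorm2, EuclideanSpace.norm_eq, dotProduct, Real.norm_eq_abs, sq, abs_mul_abs_self]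

theorem norm_sub_le_prod_sub_one_mul {E : Type*} [SeminormedAddCommGroup E] {e : ℕ → E}
    {σ : ℕ → ℝ} {c : ℕ} (hσ : ∀ ℓ < c, 0 ≤ σ ℓ)
    (hstep : ∀ ℓ < c, ‖e ℓ - e (ℓ + 1)‖ ≤ σ ℓ * ‖e ℓ‖) :
    ‖e 0 - e c‖ ≤ (∏ ℓ ∈ range c, (1 + σ ℓ) - 1) * ‖e 0‖ := by
  induction c with
  | zero => simp
  | succ c ih =>
    have ih := ih (fun ℓ hℓ => hσ ℓ (by omega)) (fun ℓ hℓ => hstep ℓ (by omega))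
    have hnorm_le : ‖e c‖ ≤ (∏ ℓ ∈ range c, (1 + σ ℓ)) * ‖e 0‖ := by
      linarith [norm_le_norm_add_norm_sub' (e c) (e 0), norm_sub_rev (e c) (e 0)]
    calc ‖e 0 - e (c + 1)‖
        ≤ ‖e 0 - e c‖ + ‖e c - e (c + 1)‖ := norm_sub_le_norm_sub_add_norm_sub _ _ _
      _ ≤ (∏ ℓ ∈ range c, (1 + σ ℓ) - 1) * ‖e 0‖ + σ c * ‖e c‖ :=
          add_le_add ih (hstep c c.lt_add_one)
      _ ≤ (∏ ℓ ∈ range c, (1 + σ ℓ) - 1) * ‖e 0‖ +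
            σ c * ((∏ ℓ ∈ range c, (1 + σ ℓ)) * ‖e 0‖) := by
          gcongr
          exact hσ c c.lt_add_one
      _ = (∏ ℓ ∈ range (c + 1), (1 + σ ℓ) - 1) * ‖e 0‖ := by
          rw [prod_range_succ]; ring

theorem multilevel_error_general {dims : ℕ → ℕ} {M : ℕ} (c : ℕ)
    (P : ∀ ℓ, Matrix (Fin (dims (ℓ + 1))) (Fin (dims ℓ)) ℝ)
    (Pp : ∀ ℓ, Matrix (Fin (dims ℓ)) (Fin (dims (ℓ + 1))) ℝ)
    (S : ∀ ℓ, Matrix (Fin M) (Fin (dims ℓ)) ℝ)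
    (x0 : Fin (dims 0) → ℝ)
    (σ : ℕ → ℝ) (hσ : ∀ ℓ, 0 ≤ σ ℓ)
    (hcompat : ∀ ℓ < c,
      S (ℓ + 1) *ᵥ xs P x0 (ℓ + 1) = S ℓ *ᵥ ((Pp ℓ * P ℓ) *ᵥ xs P x0 ℓ))
    (hlevel : ∀ ℓ < c,
      enorm2 (S ℓ *ᵥ ((1 - Pp ℓ * P ℓ) *ᵥ xs P x0 ℓ)) ≤ σ ℓ * enorm2 (S ℓ *ᵥ xs P x0 ℓ)) :
    enorm2 (S 0 *ᵥ x0 - S c *ᵥ xs P x0 c) ≤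
      ((∏ ℓ ∈ Finset.range c, (1 + σ ℓ)) - 1) * enorm2 (S 0 *ᵥ x0) := by
  let e : ℕ → EuclideanSpace ℝ (Fin M) := fun ℓ => WithLp.toLp 2 (S ℓ *ᵥ xs P x0 ℓ)
  have hstep : ∀ ℓ < c, ‖e ℓ - e (ℓ + 1)‖ ≤ σ ℓ * ‖e ℓ‖ := by
    intro ℓ hℓ
    have h := hlevel ℓ hℓ
    rw [sub_mulVec, one_mulVec, mulVec_sub, ← hcompat ℓ hℓ] at h
    simpa only [e, ← WithLp.toLp_sub, ← enorm2_eq_norm_toLp] using h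
  have h := norm_sub_le_prod_sub_one_mul (fun ℓ _ => hσ ℓ) hstep
  simp only [e, ← WithLp.toLp_sub, ← enorm2_eq_norm_toLp] at h
  exact h

/-- Multi-level error bound: if at each level
`‖S_{ℓ-1} Π⊥_ℓ x_{ℓ-1}‖₂ ≤ σ_ℓ ‖S_{ℓ-1} x_{ℓ-1}‖₂` and `S_ℓ x_ℓ = S_{ℓ-1} Π_ℓ x_{ℓ-1}`
(where `Π_ℓ = P_ℓ⁺ P_ℓ`), then
`‖S₀x₀ − S_c x_c‖₂ ≤ (∏_{ℓ=1}^c (1 + σ_ℓ) − 1) ‖S₀ x₀‖₂`. -/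
theorem multilevel_error {dims : ℕ → ℕ} {M : ℕ} (c : ℕ)
    (P : ∀ ℓ, Matrix (Fin (dims (ℓ + 1))) (Fin (dims ℓ)) ℝ)
    (Pp : ∀ ℓ, Matrix (Fin (dims ℓ)) (Fin (dims (ℓ + 1))) ℝ)
    (hMP : ∀ ℓ < c, IsMoorePenrose (P ℓ) (Pp ℓ))
    (S : ∀ ℓ, Matrix (Fin M) (Fin (dims ℓ)) ℝ)
    (x0 : Fin (dims 0) → ℝ)
    (σ : ℕ → ℝ) (hσ : ∀ ℓ, 0 ≤ σ ℓ)
    (hcompat : ∀ ℓ < c,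
      S (ℓ + 1) *ᵥ xs P x0 (ℓ + 1) = S ℓ *ᵥ ((Pp ℓ * P ℓ) *ᵥ xs P x0 ℓ))
    (hlevel : ∀ ℓ < c,
      enorm2 (S ℓ *ᵥ ((1 - Pp ℓ * P ℓ) *ᵥ xs P x0 ℓ)) ≤ σ ℓ * enorm2 (S ℓ *ᵥ xs P x0 ℓ)) :
    enorm2 (S 0 *ᵥ x0 - S c *ᵥ xs P x0 c) ≤
      ((∏ ℓ ∈ Finset.range c, (1 + σ ℓ)) - 1) * enorm2 (S 0 *ᵥ x0) :=
  multilevel_error_general c P Pp S x0 σ hσ hcompat hlevel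
end

section
/- Let G be a weighted graph with combinatorial Laplacian L, and let 𝒫 = {C₁,...,C_n} be a partition of the vertex set into contraction sets. For each set C, let Π⊥_C be the projection error operator defined by (Π⊥_C x)(i) = x(i) − (1/|C|)Σ_{j∈C} x(j) if i ∈ C and 0 otherwise, and let L_C be the Laplacian with weights W_C(i,j) = W(i,j) if i,j ∈ C, 2W(i,j) if exactly one of i,j is in C, and 0 otherwise. Then for every x ∈ ℝ^N: ‖Π⊥x‖²_L ≤ Σ_{C∈𝒫} ‖Π⊥_C x‖²_{L_C}, where Π⊥ = I − P^+P for the Laplacian-consistent coarsening matrix P associated with 𝒫. -/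
open Matrix Finset

/-- The combinatorial Laplacian of a weight matrix `W`. -/
def lap {N : ℕ} (W : Matrix (Fin N) (Fin N) ℝ) : Matrix (Fin N) (Fin N) ℝ :=
  Matrix.diagonal (fun i => ∑ j, W i j) - W

/-- Laplacian-consistent coarsening matrix of a partition given by `φ`:
`P r i = 1/|C_r|` if `φ i = r`, else `0`. -/
noncomputable def cP {N n : ℕ} (φ : Fin N → Fin n) : Matrix (Fin n) (Fin N) ℝ :=
  Matrix.of fun r i =>
    if φ i = r then ((Finset.univ.filter fun j => φ j = r).card : ℝ)⁻¹ else 0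

/-- Its pseudoinverse: `P⁺ i r = 1` if `φ i = r`, else `0`. -/
def cPp {N n : ℕ} (φ : Fin N → Fin n) : Matrix (Fin N) (Fin n) ℝ :=
  Matrix.of fun i r => if φ i = r then (1 : ℝ) else 0

/-- The localized weight matrix `W_C` of the contraction set `C_r = φ⁻¹(r)`:
`W` inside `C_r`, doubled on the boundary, `0` elsewhere. -/
def WC {N n : ℕ} (W : Matrix (Fin N) (Fin N) ℝ) (φ : Fin N → Fin n) (r : Fin n) :
    Matrix (Fin N) (Fin N) ℝ :=
  Matrix.of fun i j =>
    if φ i = r ∧ φ j = r then W i j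
    else if φ i = r ∨ φ j = r then 2 * W i j
    else 0

/-- The local projection error `Π⊥_C x` for the contraction set `C_r = φ⁻¹(r)`. -/
noncomputable def zC {N n : ℕ} (φ : Fin N → Fin n) (r : Fin n) (x : Fin N → ℝ) :
    Fin N → ℝ :=
  fun i =>
    if φ i = r then
      x i - (∑ j ∈ Finset.univ.filter fun j => φ j = r, x j) /
        ((Finset.univ.filter fun j => φ j = r).card : ℝ)
    else 0

lemma quad_expand {N : ℕ} (M : Matrix (Fin N) (Fin N) ℝ) (y : Fin N → ℝ) :
    y ⬝ᵥ (lap M *ᵥ y) = ∑ i, ∑ j, (M i j * y i * y i - M i j * y i * y j) := by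
  have hmv : ∀ i, (lap M *ᵥ y) i = (∑ j, M i j) * y i - ∑ j, M i j * y j := by
    intro i
    simp only [lap, mulVec, dotProduct, Matrix.sub_apply, sub_mul, Finset.sum_sub_distrib,
      Matrix.diagonal_apply, ite_mul, zero_mul, Finset.sum_ite_eq, Finset.mem_univ, if_true]
  simp only [dotProduct, hmv]
  refine Finset.sum_congr rfl fun i _ => ?_
  rw [mul_sub, Finset.sum_sub_distrib]
  congr 1
  · rw [Finset.sum_mul, Finset.mul_sum]; exact Finset.sum_congr rfl fun j _ => by ring
  · rw [Finset.mul_sum]; exact Finset.sum_congr rfl fun j _ => by ring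

lemma quad_form {N : ℕ} (M : Matrix (Fin N) (Fin N) ℝ) (hM : ∀ i j, M j i = M i j)
    (y : Fin N → ℝ) :
    y ⬝ᵥ (lap M *ᵥ y) = (∑ i, ∑ j, M i j * (y i - y j)^2) / 2 := by
  rw [quad_expand]
  have h1 : ∑ i, ∑ j, M i j * y j * y j = ∑ i, ∑ j, M i j * y i * y i := by
    rw [Finset.sum_comm]
    exact Finset.sum_congr rfl fun i _ => Finset.sum_congr rfl fun j _ => by rw [hM]
  have h3 : ∑ i, ∑ j, (M i j * y i * y i - M i j * y i * y j)
      = (∑ i, ∑ j, M i j * y i * y i) - ∑ i, ∑ j, M i j * y i * y j := by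
    simp [Finset.sum_sub_distrib]
  have h4 : ∑ i, ∑ j, M i j * (y i - y j)^2
      = (∑ i, ∑ j, M i j * y i * y i) + (∑ i, ∑ j, M i j * y j * y j)
        - 2 * ∑ i, ∑ j, M i j * y i * y j := by
    rw [Finset.mul_sum]
    simp only [← Finset.sum_add_distrib, ← Finset.sum_sub_distrib, Finset.mul_sum]
    exact Finset.sum_congr rfl fun i _ => Finset.sum_congr rfl fun j _ => by ring
  linarith

/-- Decoupling of the variation cost over contraction sets:
`‖Π⊥x‖²_L ≤ Σ_{C∈𝒫} ‖Π⊥_C x‖²_{L_C}`. -/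
theorem local_variation_decoupling {N n : ℕ}
    (W : Matrix (Fin N) (Fin N) ℝ) (hsym : Wᵀ = W)
    (hnn : ∀ i j, 0 ≤ W i j) (hdiag : ∀ i, W i i = 0)
    (φ : Fin N → Fin n) (hφ : Function.Surjective φ)
    (x : Fin N → ℝ) :
    (x - (cPp φ * cP φ) *ᵥ x) ⬝ᵥ (lap W *ᵥ (x - (cPp φ * cP φ) *ᵥ x)) ≤
      ∑ r : Fin n, (zC φ r x) ⬝ᵥ (lap (WC W φ r) *ᵥ (zC φ r x)) := by
  have hW : ∀ i j, W j i = W i j := fun i j => congrFun (congrFun hsym i) j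
  set y : Fin N → ℝ := x - (cPp φ * cP φ) *ᵥ x with hy_def
  have hy : ∀ i, y i = zC φ (φ i) x i := by
    intro i
    have h1 : ∀ r, (cP φ *ᵥ x) r
        = (∑ j ∈ Finset.univ.filter fun j => φ j = r, x j) *
          ((Finset.univ.filter fun j => φ j = r).card : ℝ)⁻¹ := by
      intro r
      simp only [cP, mulVec, dotProduct, Matrix.of_apply, ite_mul, zero_mul]
      rw [← Finset.sum_filter, Finset.sum_mul]
      exact Finset.sum_congr rfl fun j _ => by ring
    have h2 : ((cPp φ * cP φ) *ᵥ x) i = (cP φ *ᵥ x) (φ i) := by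
      rw [← Matrix.mulVec_mulVec]
      simp only [cPp, mulVec, dotProduct, Matrix.of_apply, ite_mul, one_mul, zero_mul,
        Finset.sum_ite_eq, Finset.mem_univ, if_true]
    simp only [hy_def, Pi.sub_apply, h2, h1, zC, if_pos rfl, div_eq_mul_inv,
      eq_self_iff_true, if_true]
  have key : ∀ i j, W i j * (y i - y j)^2
      ≤ ∑ r, WC W φ r i j * (zC φ r x i - zC φ r x j)^2 := by
    intro i j
    by_cases h : φ i = φ j
    · have hterm : ∀ r, WC W φ r i j * (zC φ r x i - zC φ r x j)^2
          = if r = φ i then W i j * (y i - y j)^2 else 0 := by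
        intro r
        by_cases hr : r = φ i
        · subst hr
          rw [hy i, hy j, ← h]
          simp [WC, zC, ← h]
        · have h1 : ¬ (φ i = r) := fun hh => hr hh.symm
          have h2 : ¬ (φ j = r) := fun hh => hr (h ▸ hh).symm
          simp [WC, zC, h1, h2, hr]
      rw [Finset.sum_congr rfl fun r _ => hterm r]
      simp
    · have hne1 : ¬ φ j = φ i := fun hh => h hh.symm
      have hterm : ∀ r, WC W φ r i j * (zC φ r x i - zC φ r x j)^2
          = (if r = φ i then 2 * W i j * (zC φ (φ i) x i)^2 else 0)
            + (if r = φ j then 2 * W i j * (zC φ (φ j) x j)^2 else 0) := by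
        intro r
        by_cases h1 : r = φ i
        · subst h1
          have e1 : WC W φ (φ i) i j = 2 * W i j := by simp [WC, hne1]
          have e2 : zC φ (φ i) x j = 0 := by simp [zC, hne1]
          rw [e1, e2, if_pos rfl, if_neg h]
          ring
        · by_cases h2 : r = φ j
          · subst h2
            have e1 : WC W φ (φ j) i j = 2 * W i j := by simp [WC, h]
            have e2 : zC φ (φ j) x i = 0 := by simp [zC, h]
            rw [e1, e2, if_neg h1, if_pos rfl]
            ring
          · have hi : ¬ (φ i = r) := fun hh => h1 hh.symm
            have hj : ¬ (φ j = r) := fun hh => h2 hh.symm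
            simp [WC, zC, hi, hj, h1, h2]
      rw [Finset.sum_congr rfl fun r _ => hterm r, Finset.sum_add_distrib]
      simp only [Finset.sum_ite_eq', Finset.mem_univ, if_true]
      rw [hy i, hy j] at *
      nlinarith [hnn i j, sq_nonneg (zC φ (φ i) x i + zC φ (φ j) x j)]
  have hWCsym : ∀ r, ∀ i j, WC W φ r j i = WC W φ r i j := by
    intro r i j
    simp only [WC, Matrix.of_apply, and_comm, or_comm, hW]
  rw [quad_form W hW y]
  have hr : ∀ r, (zC φ r x) ⬝ᵥ (lap (WC W φ r) *ᵥ (zC φ r x))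
      = (∑ i, ∑ j, WC W φ r i j * (zC φ r x i - zC φ r x j)^2) / 2 :=
    fun r => quad_form _ (hWCsym r) _
  rw [Finset.sum_congr rfl fun r _ => hr r, ← Finset.sum_div]
  have hswap : ∑ r : Fin n, ∑ i, ∑ j, WC W φ r i j * (zC φ r x i - zC φ r x j)^2
      = ∑ i, ∑ j, ∑ r : Fin n, WC W φ r i j * (zC φ r x i - zC φ r x j)^2 := by
    rw [Finset.sum_comm]
    exact Finset.sum_congr rfl fun i _ => Finset.sum_comm
  rw [hswap]
  have hle : (∑ i, ∑ j, W i j * (y i - y j)^2)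
      ≤ ∑ i, ∑ j, ∑ r : Fin n, WC W φ r i j * (zC φ r x i - zC φ r x j)^2 :=
    Finset.sum_le_sum fun i _ => Finset.sum_le_sum fun j _ => key i j
  linarith
end

section
/- Let G be a weighted graph with Laplacian L, and L_c a combinatorial Laplacian obtained from L by Laplacian-consistent coarsening with respect to a partition of V. For every vertex subset S_c of the coarse graph G_c, let S ⊆ V be the union of the contraction sets mapped into S_c. Then the conductance satisfies φ(S) ≤ φ_c(S_c), where φ(S) = w(S, S̄)/min{w(S), w(S̄)}. Consequently, φ_k(G) ≤ φ_k(G_c) for every k. -/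
open Matrix Finset

/-- Weight of the cut between `S` and its complement. -/
def cutw {N : ℕ} (W : Matrix (Fin N) (Fin N) ℝ) (S : Finset (Fin N)) : ℝ :=
  ∑ i ∈ S, ∑ j ∈ Sᶜ, W i j

/-- Volume of `S`: `w(S) = Σ_{i∈S} Σ_{j∈V} w_{ij}`. -/
def volw {N : ℕ} (W : Matrix (Fin N) (Fin N) ℝ) (S : Finset (Fin N)) : ℝ :=
  ∑ i ∈ S, ∑ j, W i j

/-- Conductance `φ(S) = w(S, S̄) / min(w(S), w(S̄))`. -/
noncomputable def conduct {N : ℕ} (W : Matrix (Fin N) (Fin N) ℝ) (S : Finset (Fin N)) : ℝ :=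
  cutw W S / min (volw W S) (volw W Sᶜ)

/-- Weights of the coarse graph under Laplacian-consistent coarsening: the weight between
two distinct coarse vertices is the cut weight between the corresponding contraction sets. -/
def coarseW {N n : ℕ} (W : Matrix (Fin N) (Fin N) ℝ) (φ : Fin N → Fin n) :
    Matrix (Fin n) (Fin n) ℝ :=
  Matrix.of fun r q =>
    if r = q then 0
    else ∑ i ∈ Finset.univ.filter fun i => φ i = r,
      ∑ j ∈ Finset.univ.filter fun j => φ j = q, W i j

/-- The preimage in `G` of a coarse vertex set `S_c`. -/
def preim {N n : ℕ} (φ : Fin N → Fin n) (Sc : Finset (Fin n)) : Finset (Fin N) :=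
  Finset.univ.filter fun i => φ i ∈ Sc

/-!
Coarsening keeps every edge between different contraction sets and only drops the edges inside
a contraction set. Hence the cut of the lifted set `preim φ Sc` equals the coarse cut of `Sc`,
while the volumes of `preim φ Sc` and of its complement can only be larger than the coarse ones,
so the conductance can only decrease. When a coarse volume vanishes the coarse conductance is the
junk value `0`; then the coarse cut vanishes as well, because by symmetry it is bounded by both
volumes. Preimages of disjoint sets are disjoint, which gives the statement about `k` sets.
-/

section Coarsening

variable {N n : ℕ}

lemma sum_sum_fiber_eq_sum_preim (φ : Fin N → Fin n) (Sc : Finset (Fin n)) (f : Fin N → ℝ) :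
    ∑ r ∈ Sc, ∑ i ∈ univ.filter (fun i => φ i = r), f i = ∑ i ∈ preim φ Sc, f i := by
  rw [preim, ← sum_fiberwise_of_maps_to (g := φ) (fun i hi => (mem_filter.mp hi).2) f]
  refine sum_congr rfl fun r hr => sum_congr ?_ fun _ _ => rfl
  ext i
  simp only [mem_filter, mem_univ, true_and]
  exact ⟨fun h => ⟨h ▸ hr, h⟩, fun h => h.2⟩

lemma preim_compl (φ : Fin N → Fin n) (Sc : Finset (Fin n)) :
    preim φ Scᶜ = (preim φ Sc)ᶜ := by
  ext i
  simp [preim]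

lemma disjoint_preim (φ : Fin N → Fin n) {Sc Tc : Finset (Fin n)} (h : Disjoint Sc Tc) :
    Disjoint (preim φ Sc) (preim φ Tc) :=
  disjoint_filter_filter' _ _ fun _ hp hq i hi => disjoint_left.mp h (hp i hi) (hq i hi)

lemma coarseW_apply_of_ne (W : Matrix (Fin N) (Fin N) ℝ) (φ : Fin N → Fin n) {r q : Fin n}
    (h : r ≠ q) :
    coarseW W φ r q = ∑ i ∈ univ.filter (fun i => φ i = r),
      ∑ j ∈ univ.filter (fun j => φ j = q), W i j := by
  simp [coarseW, h]

lemma coarseW_apply_le {W : Matrix (Fin N) (Fin N) ℝ} (hnn : ∀ i j, 0 ≤ W i j)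
    (φ : Fin N → Fin n) (r q : Fin n) :
    coarseW W φ r q ≤ ∑ i ∈ univ.filter (fun i => φ i = r),
      ∑ j ∈ univ.filter (fun j => φ j = q), W i j := by
  by_cases h : r = q
  · simpa [coarseW, h] using sum_nonneg fun i _ => sum_nonneg fun j _ => hnn i j
  · exact (coarseW_apply_of_ne W φ h).le

lemma coarseW_nonneg {W : Matrix (Fin N) (Fin N) ℝ} (hnn : ∀ i j, 0 ≤ W i j)
    (φ : Fin N → Fin n) (r q : Fin n) : 0 ≤ coarseW W φ r q := by
  by_cases h : r = q
  · simp [coarseW, h]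
  · rw [coarseW_apply_of_ne W φ h]
    exact sum_nonneg fun i _ => sum_nonneg fun j _ => hnn i j

lemma coarseW_transpose {W : Matrix (Fin N) (Fin N) ℝ} (hsym : Wᵀ = W) (φ : Fin N → Fin n) :
    (coarseW W φ)ᵀ = coarseW W φ := by
  ext r q
  rw [Matrix.transpose_apply]
  by_cases h : r = q
  · rw [h]
  · rw [coarseW_apply_of_ne W φ h, coarseW_apply_of_ne W φ (Ne.symm h)]
    exact sum_comm.trans <| sum_congr rfl fun j _ => sum_congr rfl fun i _ => congrFun₂ hsym _ _

lemma cutw_coarseW (W : Matrix (Fin N) (Fin N) ℝ) (φ : Fin N → Fin n) (Sc : Finset (Fin n)) :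
    cutw (coarseW W φ) Sc = cutw W (preim φ Sc) := by
  unfold cutw
  calc ∑ r ∈ Sc, ∑ q ∈ Scᶜ, coarseW W φ r q
      = ∑ r ∈ Sc, ∑ q ∈ Scᶜ, ∑ i ∈ univ.filter (fun i => φ i = r),
          ∑ j ∈ univ.filter (fun j => φ j = q), W i j :=
        sum_congr rfl fun r hr => sum_congr rfl fun q hq =>
          coarseW_apply_of_ne W φ fun h => mem_compl.mp hq (h ▸ hr)
    _ = ∑ r ∈ Sc, ∑ i ∈ univ.filter (fun i => φ i = r), ∑ j ∈ preim φ Scᶜ, W i j :=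
        sum_congr rfl fun r _ => sum_comm.trans <| sum_congr rfl fun i _ =>
          sum_sum_fiber_eq_sum_preim φ Scᶜ (W i)
    _ = ∑ i ∈ preim φ Sc, ∑ j ∈ (preim φ Sc)ᶜ, W i j := by
        rw [sum_sum_fiber_eq_sum_preim, preim_compl]

lemma volw_coarseW_le {W : Matrix (Fin N) (Fin N) ℝ} (hnn : ∀ i j, 0 ≤ W i j)
    (φ : Fin N → Fin n) (Sc : Finset (Fin n)) :
    volw (coarseW W φ) Sc ≤ volw W (preim φ Sc) := by
  unfold volw
  calc ∑ r ∈ Sc, ∑ q, coarseW W φ r q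
      ≤ ∑ r ∈ Sc, ∑ q, ∑ i ∈ univ.filter (fun i => φ i = r),
          ∑ j ∈ univ.filter (fun j => φ j = q), W i j :=
        sum_le_sum fun r _ => sum_le_sum fun q _ => coarseW_apply_le hnn φ r q
    _ = ∑ r ∈ Sc, ∑ i ∈ univ.filter (fun i => φ i = r), ∑ j, W i j :=
        sum_congr rfl fun r _ => sum_comm.trans <| sum_congr rfl fun i _ =>
          sum_fiberwise univ φ (W i)
    _ = ∑ i ∈ preim φ Sc, ∑ j, W i j := sum_sum_fiber_eq_sum_preim φ Sc _

end Coarsening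

section Conductance

variable {m : ℕ} {W : Matrix (Fin m) (Fin m) ℝ}

lemma cutw_nonneg (hnn : ∀ i j, 0 ≤ W i j) (S : Finset (Fin m)) : 0 ≤ cutw W S :=
  sum_nonneg fun i _ => sum_nonneg fun j _ => hnn i j

lemma cutw_le_volw (hnn : ∀ i j, 0 ≤ W i j) (S : Finset (Fin m)) : cutw W S ≤ volw W S :=
  sum_le_sum fun i _ => sum_le_sum_of_subset_of_nonneg (subset_univ _) fun j _ _ => hnn i j

lemma cutw_compl (hsym : Wᵀ = W) (S : Finset (Fin m)) : cutw W Sᶜ = cutw W S := by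
  unfold cutw
  rw [compl_compl]
  exact sum_comm.trans <| sum_congr rfl fun i _ => sum_congr rfl fun j _ => congrFun₂ hsym _ _

lemma cutw_le_min_volw (hsym : Wᵀ = W) (hnn : ∀ i j, 0 ≤ W i j) (S : Finset (Fin m)) :
    cutw W S ≤ min (volw W S) (volw W Sᶜ) :=
  le_min (cutw_le_volw hnn S) (cutw_compl hsym S ▸ cutw_le_volw hnn Sᶜ)

end Conductance

lemma conduct_preim_le {N n : ℕ} {W : Matrix (Fin N) (Fin N) ℝ} (hsym : Wᵀ = W)
    (hnn : ∀ i j, 0 ≤ W i j) (φ : Fin N → Fin n) (Sc : Finset (Fin n)) :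
    conduct W (preim φ Sc) ≤ conduct (coarseW W φ) Sc := by
  have hcnn := coarseW_nonneg hnn φ
  have hvol : min (volw (coarseW W φ) Sc) (volw (coarseW W φ) Scᶜ)
      ≤ min (volw W (preim φ Sc)) (volw W (preim φ Sc)ᶜ) :=
    min_le_min (volw_coarseW_le hnn φ Sc) (preim_compl φ Sc ▸ volw_coarseW_le hnn φ Scᶜ)
  have hcut := cutw_le_min_volw (coarseW_transpose hsym φ) hcnn Sc
  unfold conduct
  rw [← cutw_coarseW]
  rcases (cutw_nonneg hcnn Sc).eq_or_lt with h0 | hpos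
  · simp [← h0]
  · exact div_le_div_of_nonneg_left hpos.le (hpos.trans_le hcut) hvol

theorem conductance_coarsening_general {N n : ℕ}
    (W : Matrix (Fin N) (Fin N) ℝ) (hsym : Wᵀ = W)
    (hnn : ∀ i j, 0 ≤ W i j)
    (φ : Fin N → Fin n) :
    (∀ Sc : Finset (Fin n), conduct W (preim φ Sc) ≤ conduct (coarseW W φ) Sc) ∧
    ∀ (k : ℕ) (Sc : Fin k → Finset (Fin n)),
      (Pairwise fun a b => Disjoint (Sc a) (Sc b)) →
      ∃ S : Fin k → Finset (Fin N),
        (Pairwise fun a b => Disjoint (S a) (S b)) ∧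
        ∀ i, conduct W (S i) ≤ conduct (coarseW W φ) (Sc i) :=
  ⟨conduct_preim_le hsym hnn φ, fun _ Sc hdisj =>
    ⟨fun i => preim φ (Sc i), fun _ _ hab => disjoint_preim φ (hdisj hab),
      fun i => conduct_preim_le hsym hnn φ (Sc i)⟩⟩

/-- Cuts are preserved by Laplacian-consistent coarsening: for every coarse vertex set `S_c`
the lifted set `S` satisfies `φ(S) ≤ φ_c(S_c)`; consequently, for every `k`, any family of
`k` disjoint coarse subsets can be lifted to `k` disjoint subsets of no larger conductance,
so that `φ_k(G) ≤ φ_k(G_c)`. -/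
theorem conductance_coarsening {N n : ℕ}
    (W : Matrix (Fin N) (Fin N) ℝ) (hsym : Wᵀ = W)
    (hnn : ∀ i j, 0 ≤ W i j) (hdiag : ∀ i, W i i = 0)
    (φ : Fin N → Fin n) (hφ : Function.Surjective φ) :
    (∀ Sc : Finset (Fin n), conduct W (preim φ Sc) ≤ conduct (coarseW W φ) Sc) ∧
    ∀ (k : ℕ) (Sc : Fin k → Finset (Fin n)),
      (Pairwise fun a b => Disjoint (Sc a) (Sc b)) →
      ∃ S : Fin k → Finset (Fin N),
        (Pairwise fun a b => Disjoint (S a) (S b)) ∧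
        ∀ i, conduct W (S i) ≤ conduct (coarseW W φ) (Sc i) :=
  conductance_coarsening_general W hsym hnn φ
end

section
/- Let L be a combinatorial Laplacian obtained by single-level Laplacian-consistent coarsening with partition 𝒫 = {S₁,...,S_n} of {1,...,N}, with coarsening matrix P and Π = P^+P. Let U_k ∈ ℝ^{N×k} contain orthonormal eigenvectors of L. Then the n-means cost of the partition on the rows of U_k equals ‖U_k − ΠU_k‖²_F, i.e., Σ_{z=1}^n Σ_{i∈S_z} ‖U_k(i,:) − mean_{j∈S_z} U_k(j,:)‖² = ‖(I − Π)U_k‖²_F. -/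
open Matrix Finset

/-- The `n`-means cost of assigning the rows of `U` to clusters via `ψ`:
each point is compared to the centroid of its cluster. -/
noncomputable def kcost {N n k : ℕ} (U : Matrix (Fin N) (Fin k) ℝ)
    (ψ : Fin N → Fin n) : ℝ :=
  ∑ r : Fin n, ∑ i ∈ Finset.univ.filter fun i => ψ i = r, ∑ a,
    (U i a - (∑ j ∈ Finset.univ.filter fun j => ψ j = r, U j a) /
      ((Finset.univ.filter fun j => ψ j = r).card : ℝ)) ^ 2

lemma cPp_mul_cP_apply {N n : ℕ} (φ : Fin N → Fin n) (i j : Fin N) :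
    (cPp φ * cP φ) i j =
      if φ j = φ i then ((univ.filter fun m => φ m = φ i).card : ℝ)⁻¹ else 0 := by
  rw [mul_apply, sum_eq_single (φ i)]
  · simp [cPp, cP]
  · intro r _ hr
    simp [cPp, Ne.symm hr]
  · simp

lemma cPp_mul_cP_mul_apply {N n : ℕ} {m : Type*} (φ : Fin N → Fin n)
    (U : Matrix (Fin N) m ℝ) (i : Fin N) (a : m) :
    (cPp φ * cP φ * U) i a =
      (∑ j ∈ univ.filter fun j => φ j = φ i, U j a) /
        ((univ.filter fun j => φ j = φ i).card : ℝ) := by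
  simp only [mul_apply (M := cPp φ * cP φ), cPp_mul_cP_apply, ite_mul, zero_mul, sum_ite,
    sum_const_zero, add_zero, ← mul_sum, div_eq_inv_mul]

lemma kcost_eq_sum_rows {N n k : ℕ} (U : Matrix (Fin N) (Fin k) ℝ) (ψ : Fin N → Fin n) :
    kcost U ψ = ∑ i, ∑ a, (U i a - (∑ j ∈ univ.filter fun j => ψ j = ψ i, U j a) /
      ((univ.filter fun j => ψ j = ψ i).card : ℝ)) ^ 2 := by
  rw [kcost, ← sum_fiberwise univ ψ]
  refine sum_congr rfl fun r _ => sum_congr rfl fun i hi => ?_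
  rw [(mem_filter.1 hi).2]

theorem kmeans_cost_eq_frobenius_general {N n k : ℕ}
    (φ : Fin N → Fin n)
    (U : Matrix (Fin N) (Fin k) ℝ) :
    kcost U φ = ∑ i, ∑ a, ((U - (cPp φ * cP φ) * U) i a) ^ 2 := by
  simp only [kcost_eq_sum_rows, Matrix.sub_apply, cPp_mul_cP_mul_apply]

/-- The `n`-means cost of the coarsening partition on the rows of `U_k` equals
`‖U_k − Π U_k‖²_F` with `Π = P⁺P`. -/
theorem kmeans_cost_eq_frobenius {N n k : ℕ}
    (L : Matrix (Fin N) (Fin N) ℝ) (hL : Lᵀ = L)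
    (φ : Fin N → Fin n) (hφ : Function.Surjective φ)
    (U : Matrix (Fin N) (Fin k) ℝ)
    (horth : Uᵀ * U = 1)
    (heig : ∀ a : Fin k, ∃ μ : ℝ, L *ᵥ (fun i => U i a) = μ • (fun i => U i a)) :
    kcost U φ = ∑ i, ∑ a, ((U - (cPp φ * cP φ) * U) i a) ^ 2 :=
  kmeans_cost_eq_frobenius_general φ U
end
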